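/- Threshold equivalence: let B = diag(λ_1,…,λ_ℓ) with λ_j > 0 and let V be an irreducible Metzler matrix (off-diagonal entries nonnegative) with α(V) < 0. Then ρ(−B V^{−1}) > 1 if and only if α(B + V) > 0; moreover ρ(−B V^{−1}) = 1 if and only if α(B + V) = 0, and ρ(−B V^{−1}) < 1 if and only if α(B + V) < 0. -/

import Mathlib

open Finset Filter Topology

/-- A square matrix is irreducible: the directed graph whose edges are the nonzero
off-diagonal entries is strongly connected. -/
def IrreducibleSq (ℓ : ℕ) (M : Matrix (Fin ℓ) (Fin ℓ) ℝ) : Prop :=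
  ∀ i j : Fin ℓ, i ≠ j → ∃ s : ℕ, 2 ≤ s ∧ ∃ c : ℕ → Fin ℓ,
    c 0 = i ∧ c (s - 1) = j ∧
    ∀ r, r < s - 1 → c r ≠ c (r + 1) ∧ M (c r) (c (r + 1)) ≠ 0

/-- The spectral radius of a real matrix: the largest modulus of its (complex) eigenvalues. -/
noncomputable def specRad (ℓ : ℕ) (M : Matrix (Fin ℓ) (Fin ℓ) ℝ) : ℝ :=
  sSup ((fun δ : ℂ => ‖δ‖) '' spectrum ℂ (M.map (Complex.ofReal ·)))

/-!
Write `P = -V⁻¹` and `K = B P`. Shifting `V` by a large multiple of the identity and scaling gives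
`-V = c (1 - N)` with `N ≥ 0` of spectral radius `< 1`, so `P = c⁻¹ ∑ Nᵏ`, which is entrywise
positive by irreducibility. Everything else runs through nonnegative sub-eigenvectors, obtained as
`|u|` for an eigenvector `u`:
* if `μ x ≤ M x` with `M, x ≥ 0`, `x ≠ 0`, then `μ ≤ ρ(M)`, since otherwise `(1 - M/μ)⁻¹ ≥ 0`
  would force `x ≤ 0`;
* if `ε y ≤ A y` for a Metzler `A`, then `A` has an eigenvalue with real part `≥ ε`, since
  otherwise `ρ(A + c) < ε + c` for large `c`.
An eigenvalue `δ` of `B + V` with `Re δ ≥ 0` and `x = |u|` give `(1 + p Re δ) B x ≤ K (B x)` with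
`p = min P`; conversely `x = |u|` for an eigenvalue of `K` of modulus `ρ(K) ≥ 1` gives
`(1 - ρ(K)⁻¹) (min λ) y ≤ (B + V) y` with `y = P x`.
-/

open Matrix
open scoped Pointwise

theorem summable_norm_pow_of_spectralRadius_lt_one {A : Type*} [NormedRing A]
    [NormedAlgebra ℂ A] [CompleteSpace A] {a : A} (h : spectralRadius ℂ a < 1) :
    Summable fun n => ‖a ^ n‖ := by
  obtain ⟨q, hq0, hρq, hq1⟩ := ENNReal.lt_iff_exists_real_btwn.1 h
  have hq1 : q < 1 := by simpa using hq1
  refine (summable_geometric_of_lt_one hq0 hq1).of_norm_bounded_eventually_nat ?_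
  filter_upwards [(spectrum.pow_norm_pow_one_div_tendsto_nhds_spectralRadius a).eventually_lt_const
    hρq, eventually_ge_atTop 1] with n hn hn1
  rw [ENNReal.ofReal_lt_ofReal_iff', one_div,
    Real.rpow_inv_lt_iff_of_pos (norm_nonneg _) hq0 (by positivity), Real.rpow_natCast] at hn
  simpa using hn.1.le

theorem Complex.eventually_norm_ofReal_add_lt {z : ℂ} {ε : ℝ} (h : z.re < ε) :
    ∀ᶠ c : ℝ in atTop, ‖(c : ℂ) + z‖ < ε + c := by
  filter_upwards [eventually_gt_atTop (-ε),
    eventually_gt_atTop ((z.im ^ 2 + z.re ^ 2 - ε ^ 2) / (2 * (ε - z.re)))] with c hc hc'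
  rw [div_lt_iff₀ (by linarith)] at hc'
  refine lt_of_pow_lt_pow_left₀ 2 (by linarith) ?_
  rw [Complex.sq_norm, Complex.normSq_apply]
  simp only [Complex.add_re, Complex.ofReal_re, Complex.add_im, Complex.ofReal_im, zero_add]
  nlinarith

namespace Matrix

def IsMetzler {n : Type*} (A : Matrix n n ℝ) : Prop := ∀ i j, i ≠ j → 0 ≤ A i j

theorem IsMetzler.diagonal_add {n : Type*} [DecidableEq n] {A : Matrix n n ℝ} (hA : A.IsMetzler)
    (d : n → ℝ) : (diagonal d + A).IsMetzler :=
  fun i j hij => by simpa [hij] using hA i j hij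

theorem map_ofReal_smul {m n : Type*} (M : Matrix m n ℝ) (r : ℝ) :
    (r • M).map (Complex.ofReal ·) = (r : ℂ) • M.map (Complex.ofReal ·) :=
  Matrix.map_smul _ r (fun x => Complex.ofReal_mul r x) M

section Nonneg

variable {n : Type*} [Fintype n]

theorem mulVec_nonneg_of_nonneg {M : Matrix n n ℝ} (hM : ∀ i j, 0 ≤ M i j) {x : n → ℝ}
    (hx : 0 ≤ x) : 0 ≤ M *ᵥ x :=
  fun i => Finset.sum_nonneg fun j _ => mul_nonneg (hM i j) (hx j)

theorem mulVec_mono_of_nonneg {M : Matrix n n ℝ} (hM : ∀ i j, 0 ≤ M i j) {x y : n → ℝ}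
    (h : x ≤ y) : M *ᵥ x ≤ M *ᵥ y := by
  simpa [mulVec_sub] using mulVec_nonneg_of_nonneg hM (sub_nonneg.2 h)

theorem smul_le_mulVec_of_le_apply {M : Matrix n n ℝ} {p : ℝ} (hp : 0 ≤ p)
    (hpM : ∀ i j, p ≤ M i j) {x : n → ℝ} (hx : 0 ≤ x) : p • x ≤ M *ᵥ x := fun i =>
  calc p * x i ≤ M i i * x i := mul_le_mul_of_nonneg_right (hpM i i) (hx i)
    _ ≤ (M *ᵥ x) i := Finset.single_le_sum (f := fun j => M i j * x j)
        (fun j _ => mul_nonneg (hp.trans (hpM i j)) (hx j)) (Finset.mem_univ i)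

end Nonneg

variable {n : Type*} [Fintype n] [DecidableEq n]

theorem pow_apply_pos_of_chain {N : Matrix n n ℝ} (hN : ∀ i j, 0 ≤ N i j) (p : ℕ → n) (s : ℕ)
    (hp : ∀ r < s, 0 < N (p r) (p (r + 1))) : 0 < (N ^ s) (p 0) (p s) := by
  induction s with
  | zero => simp
  | succ s ih =>
    rw [pow_succ, mul_apply]
    exact Finset.sum_pos' (fun k _ => mul_nonneg (pow_apply_nonneg hN s _ k) (hN k _))
      ⟨p s, Finset.mem_univ _, mul_pos (ih fun r hr => hp r (by omega)) (hp s (by omega))⟩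

theorem exists_eigenvector_of_mem_spectrum {B : Matrix n n ℂ} {δ : ℂ} (hδ : δ ∈ spectrum ℂ B) :
    ∃ u : n → ℂ, u ≠ 0 ∧ B *ᵥ u = δ • u := by
  rw [← Matrix.spectrum_toLin', ← Module.End.hasEigenvalue_iff_mem_spectrum] at hδ
  obtain ⟨u, hu⟩ := hδ.exists_hasEigenvector
  exact ⟨u, hu.2, by simpa using hu.apply_eq_smul⟩

theorem map_ofReal_pow (M : Matrix n n ℝ) (k : ℕ) :
    (M ^ k).map (Complex.ofReal ·) = M.map (Complex.ofReal ·) ^ k :=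
  Matrix.map_pow M Complex.ofRealHom k

theorem map_ofReal_algebraMap_add (M : Matrix n n ℝ) (r : ℝ) :
    (algebraMap ℝ _ r + M).map (Complex.ofReal ·) =
      algebraMap ℂ _ r + M.map (Complex.ofReal ·) := by
  rw [Matrix.map_add _ (fun x y => Complex.ofReal_add x y), Matrix.map_algebraMap] <;> simp
  exact IsScalarTower.algebraMap_apply ℝ ℂ _ r

theorem spectrum_map_ofReal_algebraMap_add (M : Matrix n n ℝ) (r : ℝ) :
    spectrum ℂ ((algebraMap ℝ _ r + M).map (Complex.ofReal ·)) =
      {(r : ℂ)} + spectrum ℂ (M.map (Complex.ofReal ·)) := by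
  rw [map_ofReal_algebraMap_add, spectrum.singleton_add_eq]

theorem spectrum_map_ofReal_smul (M : Matrix n n ℝ) {r : ℝ} (hr : r ≠ 0) :
    spectrum ℂ ((r • M).map (Complex.ofReal ·)) =
      (r : ℂ) • spectrum ℂ (M.map (Complex.ofReal ·)) := by
  rw [map_ofReal_smul]
  exact spectrum.unit_smul_eq_smul _ (Units.mk0 (r : ℂ) (by simpa))

theorem norm_lt_one_of_mem_spectrum_inv_smul {M : Matrix n n ℝ} {μ : ℝ} (hμ : 0 < μ)
    (h : ∀ z ∈ spectrum ℂ (M.map (Complex.ofReal ·)), ‖z‖ < μ) :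
    ∀ z ∈ spectrum ℂ ((μ⁻¹ • M).map (Complex.ofReal ·)), ‖z‖ < 1 := by
  rw [spectrum_map_ofReal_smul _ (inv_ne_zero hμ.ne')]
  rintro _ ⟨z, hz, rfl⟩
  simp only [smul_eq_mul, norm_mul, Complex.norm_real, Real.norm_of_nonneg (inv_nonneg.2 hμ.le)]
  rw [inv_mul_lt_one₀ hμ]
  exact h z hz

theorem eventually_norm_lt_of_forall_re_lt {A : Matrix n n ℝ} {ε : ℝ}
    (h : ∀ z ∈ spectrum ℂ (A.map (Complex.ofReal ·)), z.re < ε) :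
    ∀ᶠ c : ℝ in atTop,
      ∀ w ∈ spectrum ℂ ((algebraMap ℝ _ c + A).map (Complex.ofReal ·)), ‖w‖ < ε + c := by
  filter_upwards [(Matrix.finite_spectrum _).eventually_all.2
    fun z hz => Complex.eventually_norm_ofReal_add_lt (h z hz)] with c hc
  rw [spectrum_map_ofReal_algebraMap_add]
  rintro _ ⟨_, rfl, z, hz, rfl⟩
  exact hc z hz

theorem exists_nonneg_norm_smul_le_mulVec {M : Matrix n n ℝ} (hM : ∀ i j, 0 ≤ M i j) {δ : ℂ}
    (hδ : δ ∈ spectrum ℂ (M.map (Complex.ofReal ·))) :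
    ∃ x : n → ℝ, 0 ≤ x ∧ x ≠ 0 ∧ ‖δ‖ • x ≤ M *ᵥ x := by
  obtain ⟨u, hu0, hu⟩ := exists_eigenvector_of_mem_spectrum hδ
  refine ⟨fun i => ‖u i‖, fun i => norm_nonneg _,
    fun h => hu0 (funext fun i => norm_eq_zero.1 (congrFun h i)), fun i => ?_⟩
  calc ‖δ‖ * ‖u i‖ = ‖∑ j, (M i j : ℂ) * u j‖ := by
        rw [← norm_mul, ← smul_eq_mul, ← Pi.smul_apply, ← hu]; rfl
    _ ≤ ∑ j, M i j * ‖u j‖ := (norm_sum_le _ _).trans_eq <| by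
        simp [Complex.norm_real, abs_of_nonneg (hM i _)]

theorem IsMetzler.eventually_nonneg_algebraMap_add {A : Matrix n n ℝ} (hA : A.IsMetzler) :
    ∀ᶠ c : ℝ in atTop, ∀ i j, 0 ≤ (algebraMap ℝ _ c + A) i j := by
  filter_upwards [eventually_all.2 fun i => eventually_ge_atTop (-A i i)] with c hc i j
  rcases eq_or_ne i j with rfl | hij
  · simpa [algebraMap_matrix_apply] using neg_le_iff_add_nonneg.1 (hc i)
  · simpa [algebraMap_matrix_apply, hij] using hA i j hij

theorem IsMetzler.exists_nonneg_re_smul_le_mulVec {A : Matrix n n ℝ} (hA : A.IsMetzler) {δ : ℂ}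
    (hδ : δ ∈ spectrum ℂ (A.map (Complex.ofReal ·))) :
    ∃ x : n → ℝ, 0 ≤ x ∧ x ≠ 0 ∧ δ.re • x ≤ A *ᵥ x := by
  obtain ⟨c, hc⟩ := hA.eventually_nonneg_algebraMap_add.exists
  have hcδ : (c : ℂ) + δ ∈ spectrum ℂ ((algebraMap ℝ _ c + A).map (Complex.ofReal ·)) := by
    rw [spectrum_map_ofReal_algebraMap_add]
    exact Set.add_mem_add rfl hδ
  obtain ⟨x, hx, hx0, hle⟩ := exists_nonneg_norm_smul_le_mulVec hc hcδ
  refine ⟨x, hx, hx0, fun i => ?_⟩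
  have hre : c + δ.re ≤ ‖(c : ℂ) + δ‖ := by simpa using Complex.re_le_norm ((c : ℂ) + δ)
  have hi := hle i
  simp only [Algebra.algebraMap_eq_smul_one, add_mulVec, smul_mulVec, one_mulVec, Pi.add_apply,
    Pi.smul_apply, smul_eq_mul] at hi ⊢
  nlinarith [mul_le_mul_of_nonneg_right hre (hx i)]

section

attribute [local instance] Matrix.linftyOpNormedAddCommGroup Matrix.linftyOpNormedRing
  Matrix.linftyOpNormedAlgebra

theorem summable_pow_of_forall_norm_lt_one [Nonempty n] {M : Matrix n n ℝ}
    (h : ∀ z ∈ spectrum ℂ (M.map (Complex.ofReal ·)), ‖z‖ < 1) : Summable (M ^ ·) := by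
  have hρ : spectralRadius ℂ (M.map (Complex.ofReal ·)) < 1 := by
    simpa using spectrum.spectralRadius_lt_of_forall_lt (r := 1) _ fun z hz => by
      simpa [← NNReal.coe_lt_coe] using h z hz
  refine Summable.of_norm ?_
  convert summable_norm_pow_of_spectralRadius_lt_one hρ using 2 with k
  rw [← map_ofReal_pow]
  simp [linfty_opNorm_def]

end

theorem isUnit_one_sub_and_pow_apply_le_inv [Nonempty n] {M : Matrix n n ℝ}
    (hM : ∀ i j, 0 ≤ M i j) (h : ∀ z ∈ spectrum ℂ (M.map (Complex.ofReal ·)), ‖z‖ < 1) :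
    IsUnit (1 - M) ∧ ∀ k i j, (M ^ k) i j ≤ (1 - M)⁻¹ i j := by
  have hs := summable_pow_of_forall_norm_lt_one h
  have hinv : (1 - M)⁻¹ = ∑' k, M ^ k := Matrix.inv_eq_left_inv hs.tsum_pow_mul_one_sub
  refine ⟨⟨⟨1 - M, ∑' k, M ^ k, hs.one_sub_mul_tsum_pow, hs.tsum_pow_mul_one_sub⟩, rfl⟩,
    fun k i j => ?_⟩
  have hentry : (1 - M)⁻¹ i j = ∑' k, (M ^ k) i j := by
    rw [hinv]
    exact (congrFun (tsum_apply hs) j).trans (tsum_apply (Pi.summable.1 hs i))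
  rw [hentry]
  exact (Pi.summable.1 (Pi.summable.1 hs i) j).le_tsum k fun l _ => pow_apply_nonneg hM l i j

end Matrix

section

variable {ℓ : ℕ}

theorem IrreducibleSq.mono {M N : Matrix (Fin ℓ) (Fin ℓ) ℝ}
    (hMN : ∀ i j, i ≠ j → M i j ≠ 0 → N i j ≠ 0) (hM : IrreducibleSq ℓ M) :
    IrreducibleSq ℓ N := fun i j hij => by
  obtain ⟨s, hs, p, h0, hs1, hp⟩ := hM i j hij
  exact ⟨s, hs, p, h0, hs1, fun r hr => ⟨(hp r hr).1, hMN _ _ (hp r hr).1 (hp r hr).2⟩⟩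

theorem IrreducibleSq.exists_pow_apply_pos {N : Matrix (Fin ℓ) (Fin ℓ) ℝ}
    (hN : ∀ i j, 0 ≤ N i j) (hirr : IrreducibleSq ℓ N) (i j : Fin ℓ) : ∃ k, 0 < (N ^ k) i j := by
  rcases eq_or_ne i j with rfl | hij
  · exact ⟨0, by simp⟩
  obtain ⟨s, -, p, rfl, rfl, hp⟩ := hirr i j hij
  exact ⟨s - 1, pow_apply_pos_of_chain hN p _ fun r hr => (hN _ _).lt_of_ne' (hp r hr).2⟩

theorem norm_le_specRad {M : Matrix (Fin ℓ) (Fin ℓ) ℝ} {z : ℂ}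
    (hz : z ∈ spectrum ℂ (M.map (Complex.ofReal ·))) : ‖z‖ ≤ specRad ℓ M :=
  le_csSup ((Matrix.finite_spectrum _).image _).bddAbove (Set.mem_image_of_mem _ hz)

theorem specRad_nonneg (M : Matrix (Fin ℓ) (Fin ℓ) ℝ) : 0 ≤ specRad ℓ M :=
  Real.sSup_nonneg (by rintro _ ⟨z, -, rfl⟩; exact norm_nonneg z)

theorem exists_norm_eq_specRad (hℓ : 1 ≤ ℓ) (M : Matrix (Fin ℓ) (Fin ℓ) ℝ) :
    ∃ δ ∈ spectrum ℂ (M.map (Complex.ofReal ·)), ‖δ‖ = specRad ℓ M := by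
  have : Nonempty (Fin ℓ) := ⟨⟨0, hℓ⟩⟩
  exact ((spectrum.nonempty_of_isAlgClosed_of_finiteDimensional ℂ _).image _).csSup_mem
    ((Matrix.finite_spectrum _).image _)

theorem le_specRad_of_smul_le_mulVec (hℓ : 1 ≤ ℓ) {M : Matrix (Fin ℓ) (Fin ℓ) ℝ}
    (hM : ∀ i j, 0 ≤ M i j) {x : Fin ℓ → ℝ} (hx : 0 ≤ x) (hx0 : x ≠ 0) {μ : ℝ}
    (h : μ • x ≤ M *ᵥ x) : μ ≤ specRad ℓ M := by
  have : Nonempty (Fin ℓ) := ⟨⟨0, hℓ⟩⟩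
  by_contra! hρμ
  have hμ : 0 < μ := (specRad_nonneg M).trans_lt hρμ
  set N := μ⁻¹ • M
  have hN : ∀ i j, 0 ≤ N i j := fun i j => mul_nonneg (inv_nonneg.2 hμ.le) (hM i j)
  obtain ⟨hunit, hle⟩ := isUnit_one_sub_and_pow_apply_le_inv hN <|
    norm_lt_one_of_mem_spectrum_inv_smul hμ fun z hz => (norm_le_specRad hz).trans_lt hρμ
  have hsub : (1 - N) *ᵥ x ≤ 0 := fun i => by
    have hi : μ * x i ≤ (M *ᵥ x) i := h i
    simp only [N, sub_mulVec, one_mulVec, smul_mulVec, Pi.sub_apply, Pi.smul_apply, smul_eq_mul,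
      Pi.zero_apply]
    rwa [sub_nonpos, le_inv_mul_iff₀ hμ]
  have hx' : x ≤ 0 := by
    have := mulVec_mono_of_nonneg (fun i j => (pow_apply_nonneg hN 0 i j).trans (hle 0 i j)) hsub
    rwa [mulVec_mulVec, nonsing_inv_mul _ ((isUnit_iff_isUnit_det _).1 hunit), one_mulVec,
      mulVec_zero] at this
  exact hx0 (le_antisymm hx' hx)

theorem Matrix.IsMetzler.exists_le_re_of_smul_le_mulVec (hℓ : 1 ≤ ℓ)
    {A : Matrix (Fin ℓ) (Fin ℓ) ℝ} (hA : A.IsMetzler) {y : Fin ℓ → ℝ} (hy : 0 ≤ y)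
    (hy0 : y ≠ 0) {ε : ℝ} (h : ε • y ≤ A *ᵥ y) : ∃ δ ∈ spectrum ℂ (A.map (Complex.ofReal ·)), ε ≤ δ.re := by
  by_contra! hlt
  obtain ⟨c, hc, hcρ⟩ :=
    (hA.eventually_nonneg_algebraMap_add.and (eventually_norm_lt_of_forall_re_lt hlt)).exists
  have hshift : (ε + c) • y ≤ (algebraMap ℝ _ c + A) *ᵥ y := fun i => by
    have hi : ε * y i ≤ (A *ᵥ y) i := h i
    simp only [Algebra.algebraMap_eq_smul_one, add_mulVec, smul_mulVec, one_mulVec, Pi.add_apply,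
      Pi.smul_apply, smul_eq_mul]
    linarith
  obtain ⟨w, hw, hwρ⟩ := exists_norm_eq_specRad hℓ (algebraMap ℝ _ c + A)
  exact (hcρ w hw).not_ge (hwρ ▸ le_specRad_of_smul_le_mulVec hℓ hc hy hy0 hshift)

theorem Matrix.IsMetzler.isUnit_det_and_inv_apply_neg (hℓ : 1 ≤ ℓ) {V : Matrix (Fin ℓ) (Fin ℓ) ℝ}
    (hV : V.IsMetzler) (hirr : IrreducibleSq ℓ V)
    (hstable : ∀ δ ∈ spectrum ℂ (V.map (Complex.ofReal ·)), δ.re < 0) :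
    IsUnit V.det ∧ ∀ i j, V⁻¹ i j < 0 := by
  have : Nonempty (Fin ℓ) := ⟨⟨0, hℓ⟩⟩
  obtain ⟨c, ⟨hc, hcρ⟩, hc0⟩ := ((hV.eventually_nonneg_algebraMap_add.and
    (eventually_norm_lt_of_forall_re_lt hstable)).and (eventually_gt_atTop 0)).exists
  set N := c⁻¹ • (algebraMap ℝ _ c + V)
  have hN : ∀ i j, 0 ≤ N i j := fun i j => mul_nonneg (inv_nonneg.2 hc0.le) (hc i j)
  obtain ⟨hunit, hle⟩ := isUnit_one_sub_and_pow_apply_le_inv hN <|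
    norm_lt_one_of_mem_spectrum_inv_smul hc0 fun w hw => by simpa using hcρ w hw
  have hVN : V = (-c) • (1 - N) := by
    simp only [N, Algebra.algebraMap_eq_smul_one]
    match_scalars <;> simp [hc0.ne']
  have hright : V * ((-c)⁻¹ • (1 - N)⁻¹) = 1 := by
    rw [hVN, smul_mul_smul, mul_inv_cancel₀ (neg_ne_zero.2 hc0.ne'), one_smul,
      mul_nonsing_inv _ ((isUnit_iff_isUnit_det _).1 hunit)]
  have hirrN : IrreducibleSq ℓ N := hirr.mono fun i j hij hVij => by
    simpa [N, algebraMap_matrix_apply, hij, hc0.ne'] using hVij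
  refine ⟨isUnit_det_of_right_inverse hright, fun i j => ?_⟩
  obtain ⟨k, hk⟩ := hirrN.exists_pow_apply_pos hN i j
  rw [inv_eq_right_inv hright, Matrix.smul_apply, smul_eq_mul]
  exact mul_neg_of_neg_of_pos (by simpa using hc0) (hk.trans_le (hle k i j))

theorem one_add_mul_re_le_specRad (hℓ : 1 ≤ ℓ) {lam : Fin ℓ → ℝ} (hlam : ∀ j, 0 < lam j)
    {V : Matrix (Fin ℓ) (Fin ℓ) ℝ} (hV : V.IsMetzler) (hVdet : IsUnit V.det) {p : ℝ}
    (hp : 0 ≤ p) (hpV : ∀ i j, p ≤ (-V⁻¹) i j) {δ : ℂ}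
    (hδ : δ ∈ spectrum ℂ ((diagonal lam + V).map (Complex.ofReal ·))) (hre : 0 ≤ δ.re) :
    1 + p * δ.re ≤ specRad ℓ (-(diagonal lam * V⁻¹)) := by
  obtain ⟨x, hx, hx0, hsub⟩ := (hV.diagonal_add lam).exists_nonneg_re_smul_le_mulVec hδ
  have hP : ∀ i j, 0 ≤ (-V⁻¹) i j := fun i j => hp.trans (hpV i j)
  have hPVx : -V⁻¹ *ᵥ (V *ᵥ x) = -x := by
    rw [mulVec_mulVec, neg_mul, nonsing_inv_mul _ hVdet, neg_mulVec, one_mulVec]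
  have hPx : δ.re • (-V⁻¹) *ᵥ x + x ≤ -V⁻¹ *ᵥ (diagonal lam *ᵥ x) := by
    have := mulVec_mono_of_nonneg hP (sub_le_iff_le_add.2 (add_mulVec _ _ x ▸ hsub))
    rwa [mulVec_sub, mulVec_smul, hPVx, sub_neg_eq_add] at this
  have hKy : (1 + p * δ.re) • (diagonal lam *ᵥ x) ≤
      -(diagonal lam * V⁻¹) *ᵥ (diagonal lam *ᵥ x) := fun i => by
    have h1 : p * x i ≤ (-V⁻¹ *ᵥ x) i := smul_le_mulVec_of_le_apply hp hpV hx i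
    have h2 := hPx i
    simp only [Pi.add_apply, Pi.smul_apply, smul_eq_mul] at h2
    rw [← mul_neg, ← mulVec_mulVec, Pi.smul_apply, mulVec_diagonal, mulVec_diagonal, smul_eq_mul]
    nlinarith [hlam i, mul_le_mul_of_nonneg_left h1 hre]
  refine le_specRad_of_smul_le_mulVec hℓ (fun i j => ?_) (fun i => ?_) (fun h => hx0 ?_) hKy
  · rw [← mul_neg, diagonal_mul]; exact mul_nonneg (hlam i).le (hP i j)
  · rw [mulVec_diagonal]; exact mul_nonneg (hlam i).le (hx i)
  · funext i
    simpa [mulVec_diagonal, (hlam i).ne'] using congrFun h i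

theorem exists_mul_le_re_of_one_le_specRad (hℓ : 1 ≤ ℓ) {lam : Fin ℓ → ℝ}
    (hlam : ∀ j, 0 ≤ lam j) {m : ℝ} (hm : ∀ j, m ≤ lam j) {V : Matrix (Fin ℓ) (Fin ℓ) ℝ}
    (hV : V.IsMetzler) (hVdet : IsUnit V.det) (hP : ∀ i j, 0 ≤ (-V⁻¹) i j)
    (hρ : 1 ≤ specRad ℓ (-(diagonal lam * V⁻¹))) :
    ∃ δ ∈ spectrum ℂ ((diagonal lam + V).map (Complex.ofReal ·)),
      (1 - (specRad ℓ (-(diagonal lam * V⁻¹)))⁻¹) * m ≤ δ.re := by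
  set ρ := specRad ℓ (-(diagonal lam * V⁻¹))
  have hK : ∀ i j, 0 ≤ (-(diagonal lam * V⁻¹)) i j := fun i j => by
    rw [← mul_neg, diagonal_mul]; exact mul_nonneg (hlam i) (hP i j)
  obtain ⟨δ, hδ, hδρ⟩ := exists_norm_eq_specRad hℓ (-(diagonal lam * V⁻¹))
  obtain ⟨x, hx, hx0, hρx⟩ := exists_nonneg_norm_smul_le_mulVec hK hδ
  rw [hδρ] at hρx
  set y := -V⁻¹ *ᵥ x
  have hy : 0 ≤ y := mulVec_nonneg_of_nonneg hP hx
  have hVy : V *ᵥ y = -x := by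
    rw [mulVec_mulVec, mul_neg, mul_nonsing_inv _ hVdet, neg_mulVec, one_mulVec]
  have hy0 : y ≠ 0 := fun h => hx0 (by simpa [h] using hVy.symm)
  have hKx : -(diagonal lam * V⁻¹) *ᵥ x = diagonal lam *ᵥ y := by
    rw [← mul_neg, ← mulVec_mulVec]
  refine (hV.diagonal_add lam).exists_le_re_of_smul_le_mulVec hℓ hy hy0 fun i => ?_
  have h1 : ρ * x i ≤ lam i * y i := by simpa [hKx, mulVec_diagonal] using hρx i
  have h2 : x i ≤ ρ⁻¹ * (lam i * y i) := by rwa [le_inv_mul_iff₀ (one_pos.trans_le hρ)]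
  have h3 : 0 ≤ 1 - ρ⁻¹ := sub_nonneg.2 (inv_le_one_of_one_le₀ hρ)
  rw [Pi.smul_apply, add_mulVec, Pi.add_apply, hVy, mulVec_diagonal, smul_eq_mul, Pi.neg_apply]
  nlinarith [mul_le_mul_of_nonneg_left (mul_le_mul_of_nonneg_right (hm i) (hy i)) h3]

end

theorem eq_one_iff_of_lt_one_iff {ρ : ℝ} {S : Set ℂ}
    (h₁ : 1 < ρ ↔ ∃ δ ∈ S, 0 < δ.re) (h₂ : ρ < 1 ↔ ∀ δ ∈ S, δ.re < 0) :
    ρ = 1 ↔ (∀ δ ∈ S, δ.re ≤ 0) ∧ ∃ δ ∈ S, δ.re = 0 := by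
  rw [le_antisymm_iff, ← not_lt, ← not_lt, h₁, h₂]
  push Not
  exact ⟨fun ⟨hle, δ, hδ, hre⟩ => ⟨hle, δ, hδ, le_antisymm (hle δ hδ) hre⟩,
    fun ⟨hle, δ, hδ, hre⟩ => ⟨hle, δ, hδ, hre.ge⟩⟩

/-- Threshold equivalence: for `B = diag(λ)` with `λ_j > 0` and `V` an irreducible Metzler
matrix with negative stability modulus, the position of `ρ(−B V⁻¹)` with respect to `1`
agrees with the sign of the stability modulus `α(B + V)`. -/
theorem threshold_equivalence
    (ℓ : ℕ) (hℓ : 1 ≤ ℓ)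
    (lam : Fin ℓ → ℝ) (hlam : ∀ j, 0 < lam j)
    (V : Matrix (Fin ℓ) (Fin ℓ) ℝ)
    (hMetzler : ∀ i j, i ≠ j → 0 ≤ V i j)
    (hirr : IrreducibleSq ℓ V)
    (hstable : ∀ δ ∈ spectrum ℂ (V.map (Complex.ofReal ·)), δ.re < 0) :
    (1 < specRad ℓ (-(Matrix.diagonal lam * V⁻¹)) ↔
      ∃ δ ∈ spectrum ℂ ((Matrix.diagonal lam + V).map (Complex.ofReal ·)), 0 < δ.re) ∧
    (specRad ℓ (-(Matrix.diagonal lam * V⁻¹)) = 1 ↔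
      ((∀ δ ∈ spectrum ℂ ((Matrix.diagonal lam + V).map (Complex.ofReal ·)), δ.re ≤ 0) ∧
       (∃ δ ∈ spectrum ℂ ((Matrix.diagonal lam + V).map (Complex.ofReal ·)), δ.re = 0))) ∧
    (specRad ℓ (-(Matrix.diagonal lam * V⁻¹)) < 1 ↔
      ∀ δ ∈ spectrum ℂ ((Matrix.diagonal lam + V).map (Complex.ofReal ·)), δ.re < 0) := by
  have : Nonempty (Fin ℓ) := ⟨⟨0, hℓ⟩⟩
  obtain ⟨hVdet, hVinv⟩ :=
    Matrix.IsMetzler.isUnit_det_and_inv_apply_neg hℓ hMetzler hirr hstable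
  obtain ⟨⟨i₀, j₀⟩, hp⟩ := Finite.exists_min fun ij : Fin ℓ × Fin ℓ => (-V⁻¹) ij.1 ij.2
  obtain ⟨k₀, hm⟩ := Finite.exists_min lam
  have hp0 : 0 < (-V⁻¹) i₀ j₀ := neg_pos.2 (hVinv i₀ j₀)
  have hI := fun δ => one_add_mul_re_le_specRad (δ := δ) hℓ hlam hMetzler hVdet hp0.le
    fun i j => hp (i, j)
  have hII := exists_mul_le_re_of_one_le_specRad hℓ (fun j => (hlam j).le) hm hMetzler hVdet
    fun i j => (hp0.trans_le (hp (i, j))).le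
  set ρ := specRad ℓ (-(Matrix.diagonal lam * V⁻¹))
  set S := spectrum ℂ ((Matrix.diagonal lam + V).map (Complex.ofReal ·))
  have h₁ : 1 < ρ ↔ ∃ δ ∈ S, 0 < δ.re := by
    refine ⟨fun hρ => ?_, fun ⟨δ, hδ, hre⟩ => ?_⟩
    · obtain ⟨δ, hδ, hre⟩ := hII hρ.le
      exact ⟨δ, hδ, (mul_pos (sub_pos.2 (inv_lt_one_of_one_lt₀ hρ)) (hlam k₀)).trans_le hre⟩
    · linarith [hI δ hδ hre.le, mul_pos hp0 hre]
  have h₂ : ρ < 1 ↔ ∀ δ ∈ S, δ.re < 0 := by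
    refine ⟨fun hρ δ hδ => ?_, fun hall => ?_⟩
    · by_contra! hre
      linarith [hI δ hδ hre, mul_nonneg hp0.le hre]
    · by_contra! hρ
      obtain ⟨δ, hδ, hre⟩ := hII hρ
      linarith [hall δ hδ, mul_nonneg (sub_nonneg.2 (inv_le_one_of_one_le₀ hρ)) (hlam k₀).le]
  exact ⟨h₁, eq_one_iff_of_lt_one_iff h₁ h₂, h₂⟩
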